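/- Let X be a finitely primitive countable Markov shift with associated finite set Λ of admissible strings all of length N, let φ: X → ℝ be measurable and μ_φ a Gibbs state for φ. Then there exists c > 0 such that for every pair of symbols (a,b) ∈ S×S and every integer n > N, μ_φ([a] ∩ σ^{-n}[b]) ≥ c · μ_φ[a] · μ_φ[b]. -/

import Mathlib

open MeasureTheory Filter Topology Set
open scoped ENNReal NNReal

namespace CMS

/-! ### Generic dynamical notions -/

variable {X : Type*}

/-- Birkhoff sum `S_n φ`. -/
noncomputable def birkhoff (T : X → X) (φ : X → ℝ) (n : ℕ) (x : X) : ℝ :=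
  ∑ i ∈ Finset.range n, φ (T^[i] x)

/-- A measure is invariant under `T`. -/
def Invariant [MeasurableSpace X] (T : X → X) (μ : Measure X) : Prop :=
  Measure.map T μ = μ

/-- `∫ φ dμ > -∞`, i.e. the negative part of `φ` is integrable. -/
def IntegralGtBot [MeasurableSpace X] (φ : X → ℝ) (μ : Measure X) : Prop :=
  (∫⁻ x, ENNReal.ofReal (-φ x) ∂μ) ≠ ⊤

/-- The integral of `φ`, with values in `EReal` (defined whenever one of the parts is finite). -/
noncomputable def eintegral [MeasurableSpace X] (φ : X → ℝ) (μ : Measure X) : EReal :=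
  ((∫⁻ x, ENNReal.ofReal (φ x) ∂μ : ℝ≥0∞) : EReal) -
    ((∫⁻ x, ENNReal.ofReal (-φ x) ∂μ : ℝ≥0∞) : EReal)

/-- Entropy of the countable partition induced by a map `g` with countable range. -/
noncomputable def partitionEntropy [MeasurableSpace X] {α : Type*} (μ : Measure X) (g : X → α) :
    ℝ≥0∞ :=
  ∑' a : α, ENNReal.ofReal (-((μ (g ⁻¹' {a})).toReal * Real.log ((μ (g ⁻¹' {a})).toReal)))

/-- Kolmogorov–Sinaĭ entropy of `T` with respect to `μ`: the supremum over finite measurable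
partitions (coded by maps `X → ℕ` with finite range) of the asymptotic entropy of iterated
joins of the partition. -/
noncomputable def entropy [MeasurableSpace X] (T : X → X) (μ : Measure X) : ℝ≥0∞ :=
  ⨆ (p : X → ℕ) (_ : Measurable p ∧ (Set.range p).Finite),
    atTop.liminf fun n : ℕ =>
      ENNReal.ofReal ((n : ℝ)⁻¹) * partitionEntropy μ (fun x => fun i : Fin n => p (T^[i] x))

/-- The empirical measure `δ_x^n = (1/n) ∑_{i<n} δ_{T^i x}` (with junk convention `n = 0 ↦ n = 1`,
irrelevant since only `n ≥ 1` is ever used). -/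
noncomputable def empirical [MeasurableSpace X] (T : X → X) (x : X) (n : ℕ) :
    ProbabilityMeasure X :=
  ⟨((max n 1 : ℕ) : ℝ≥0∞)⁻¹ • ∑ i ∈ Finset.range (max n 1), Measure.dirac (T^[i] x), by
    refine ⟨?_⟩
    have h1 : (∑ i ∈ Finset.range (max n 1), Measure.dirac (T^[i] x)) Set.univ
        = ((max n 1 : ℕ) : ℝ≥0∞) := by
      rw [Measure.finset_sum_apply]
      simp
    rw [Measure.smul_apply, h1, smul_eq_mul, ENNReal.inv_mul_cancel] <;> simp⟩

noncomputable instance [MeasurableSpace X] [TopologicalSpace X] [OpensMeasurableSpace X] :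
    MeasurableSpace (ProbabilityMeasure X) := borel _

/-- Sets of periodic points. -/
def perSet (T : X → X) (n : ℕ) : Set X := {x | T^[n] x = x}

/-- Sets of iterated preimages of a point. -/
def preimSet (T : X → X) (n : ℕ) (y : X) : Set X := {x | T^[n] x = y}

/-- The partition function `Z_n(φ, C)` over a subset `C`. -/
noncomputable def Zfn [MeasurableSpace X] (T : X → X) (φ : X → ℝ) (n : ℕ) (C : Set X) : ℝ≥0∞ :=
  ∑' x : C, ENNReal.ofReal (Real.exp (birkhoff T φ n x))

/-- The distribution of the empirical measures under `μ`. -/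
noncomputable def empDistr [MeasurableSpace X] [TopologicalSpace X] [OpensMeasurableSpace X]
    (T : X → X) (μ : Measure X) (n : ℕ) : Measure (ProbabilityMeasure X) :=
  Measure.map (fun x => empirical T x n) μ

/-- The distribution `Z_n(φ,C)⁻¹ ∑_{x ∈ C} e^{S_nφ(x)} δ_{δ_x^n}` on the space of probability
measures, for a countable set `C` (of weighted periodic points or iterated preimages). -/
noncomputable def weightedDistr [MeasurableSpace X] [TopologicalSpace X] [OpensMeasurableSpace X]
    (T : X → X) (φ : X → ℝ) (n : ℕ) (C : Set X) : Measure (ProbabilityMeasure X) :=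
  (Zfn T φ n C)⁻¹ •
    Measure.sum (fun x : C =>
      ENNReal.ofReal (Real.exp (birkhoff T φ n x)) • Measure.dirac (empirical T (x : X) n))

/-! ### Large deviations notions -/

variable {Y : Type*}

/-- The large deviation principle for a sequence of (sub)probability measures with rate
function `J`. -/
def HasLDP [TopologicalSpace Y] [MeasurableSpace Y] (μ : ℕ → Measure Y) (J : Y → EReal) : Prop :=
  (∀ G : Set Y, IsOpen G →
      -(⨅ y ∈ G, J y) ≤
        atTop.liminf fun n : ℕ => (((n : ℝ)⁻¹ : ℝ) : EReal) * ENNReal.log (μ n G)) ∧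
  (∀ K : Set Y, IsClosed K →
      atTop.limsup (fun n : ℕ => (((n : ℝ)⁻¹ : ℝ) : EReal) * ENNReal.log (μ n K)) ≤
        -(⨅ y ∈ K, J y))

/-- Exponential tightness of a sequence of measures. -/
def ExpTight [TopologicalSpace Y] [MeasurableSpace Y] (μ : ℕ → Measure Y) : Prop :=
  ∀ L : ℝ, 0 < L → ∃ K : Set Y, IsCompact K ∧
    atTop.limsup (fun n : ℕ => (((n : ℝ)⁻¹ : ℝ) : EReal) * ENNReal.log (μ n Kᶜ)) ≤ ((-L : ℝ) : EReal)

/-- A good rate function: lower semicontinuous with compact sublevel sets. -/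
def GoodRate [TopologicalSpace Y] (J : Y → EReal) : Prop :=
  LowerSemicontinuous J ∧ ∀ α : ℝ, 0 ≤ α → IsCompact {y | J y ≤ (α : EReal)}

/-- The rate function `I(μ) = - inf_{G ∋ μ} sup_G F`. -/
noncomputable def rateOf [TopologicalSpace Y] (F : Y → EReal) (μ : Y) : EReal :=
  -(⨅ (G : Set Y) (_ : IsOpen G ∧ μ ∈ G), ⨆ ν ∈ G, F ν)

/-- The convex combination `t μ + (1-t) ν` of two probability measures. -/
noncomputable def mix [MeasurableSpace X] (t : ℝ) (h0 : 0 ≤ t) (h1 : t ≤ 1)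
    (μ ν : ProbabilityMeasure X) : ProbabilityMeasure X :=
  ⟨ENNReal.ofReal t • (μ : Measure X) + ENNReal.ofReal (1 - t) • (ν : Measure X), by
    refine ⟨?_⟩
    simp only [Measure.add_apply, Measure.smul_apply, smul_eq_mul, measure_univ, mul_one]
    rw [← ENNReal.ofReal_add h0 (by linarith)]
    norm_num⟩

/-- Convexity of a rate function on probability measures. -/
def ConvexRate [MeasurableSpace X] (J : ProbabilityMeasure X → EReal) : Prop :=
  ∀ μ ν : ProbabilityMeasure X, ∀ t : ℝ, ∀ (h0 : 0 ≤ t) (h1 : t ≤ 1),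
    J (mix t h0 h1 μ ν) ≤ ((t : ℝ) : EReal) * J μ + ((1 - t : ℝ) : EReal) * J ν

-- The free energy functional `F`.
open Classical in
noncomputable def freeEnergy [MeasurableSpace X] (T : X → X) (φ : X → ℝ) (P : ℝ)
    (ν : ProbabilityMeasure X) : EReal :=
  if Invariant T (ν : Measure X) ∧ IntegralGtBot φ (ν : Measure X)
  then ((entropy T (ν : Measure X) : ℝ≥0∞) : EReal) + eintegral φ (ν : Measure X) - ((P : ℝ) : EReal)
  else ⊥

/-! ### Countable Markov shifts -/

variable {S : Type*}

/-- The topological Markov shift with alphabet `S` and transition relation `A`. -/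
def Space (A : S → S → Prop) : Type _ := {x : ℕ → S // ∀ i, A (x i) (x (i + 1))}

variable (A : S → S → Prop)

instance [TopologicalSpace S] : TopologicalSpace (Space A) :=
  inferInstanceAs (TopologicalSpace {x : ℕ → S // ∀ i, A (x i) (x (i + 1))})

noncomputable instance [TopologicalSpace S] : MeasurableSpace (Space A) := borel _

instance [TopologicalSpace S] : BorelSpace (Space A) := ⟨rfl⟩

/-- The left shift. -/
def shift : Space A → Space A := fun x => ⟨fun i => x.1 (i + 1), fun i => x.2 (i + 1)⟩

/-- Admissible words. -/
def Admissible (w : List S) : Prop := w ≠ [] ∧ w.Chain' A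

/-- The cylinder set of a word. -/
def cylinder (w : List S) : Set (Space A) := {x | ∀ i : Fin w.length, x.1 i = w.get i}

variable {A}

/-- The initial word of length `n` of a point. -/
def word (x : Space A) (n : ℕ) : List S := List.ofFn (fun i : Fin n => x.1 i)

variable (A)

/-- `μ` is a Gibbs state for the potential `φ` with constants `c₀` and `P`. -/
def IsGibbsWith [TopologicalSpace S] (φ : Space A → ℝ) (μ : Measure (Space A)) (c₀ P : ℝ) :
    Prop :=
  ∀ n : ℕ, 1 ≤ n → ∀ x : Space A,
    c₀⁻¹ * Real.exp (-(P * n) + birkhoff (shift A) φ n x)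
        ≤ (μ (cylinder A (word x n))).toReal ∧
      (μ (cylinder A (word x n))).toReal
        ≤ c₀ * Real.exp (-(P * n) + birkhoff (shift A) φ n x)

/-- `μ` is a Gibbs state for `φ`. -/
def IsGibbs [TopologicalSpace S] (φ : Space A → ℝ) (μ : Measure (Space A)) : Prop :=
  ∃ c₀ P : ℝ, 1 ≤ c₀ ∧ IsGibbsWith A φ μ c₀ P

/-- The transition matrix has no row or column identically zero. -/
def NoZeroRowCol : Prop := (∀ a : S, ∃ b, A a b) ∧ ∀ b : S, ∃ a, A a b

/-- Finite irreducibility. -/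
def FinitelyIrreducible : Prop :=
  ∃ Λ : Finset (List S), ∀ v w : List S, Admissible A v → Admissible A w →
    ∃ l ∈ Λ, Admissible A (v ++ l ++ w)

/-- Finite primitiveness. -/
def FinitelyPrimitive : Prop :=
  ∃ Λ : Finset (List S), (∃ N : ℕ, ∀ l ∈ Λ, l.length = N) ∧
    ∀ v w : List S, Admissible A v → Admissible A w →
      ∃ l ∈ Λ, Admissible A (v ++ l ++ w)

/-- Topological transitivity. -/
def TopTransitive : Prop :=
  ∀ a b : S, ∃ n : ℕ, 1 ≤ n ∧
    (cylinder A [a] ∩ (shift A)^[n] ⁻¹' (cylinder A [b])).Nonempty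

/-- Varadhan's functional `Q(ψ) = sup_μ (∫ψ dμ - I(μ))`. -/
noncomputable def varQ {X : Type*} [MeasurableSpace X] (I : ProbabilityMeasure X → EReal)
    (ψ : X → ℝ) : EReal :=
  ⨆ μ : ProbabilityMeasure X, (((∫ x, ψ x ∂(μ : Measure X)) : ℝ) : EReal) - I μ

/-- `φ` is uniformly continuous for the standard metric of the shift space. -/
def UnifCont (φ : Space A → ℝ) : Prop :=
  ∀ ε : ℝ, 0 < ε → ∃ N : ℕ, ∀ x y : Space A, (∀ i < N, x.1 i = y.1 i) → |φ x - φ y| ≤ ε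

/-- `φ` is bounded. -/
def Bdd (φ : Space A → ℝ) : Prop := ∃ C : ℝ, ∀ x : Space A, |φ x| ≤ C

end CMS

/-!
Cover `[a]` by the cylinders `[u]` of the words `u` of length `m = n - N` that start with `a`.
Finite primitivity joins each such `u` to `b` through a word `l_u ∈ Λ`; the cylinders
`[u l_u b]` are pairwise disjoint and lie in `[a] ∩ σ^{-n}[b]`. The Gibbs property makes the
measure quasi-multiplicative, `μ[u l b] ≥ c₀⁻⁶ μ[u] μ[l] μ[b]`, and the finitely many positive
values `μ[l]`, `l ∈ Λ`, are bounded below by some `ε > 0`. Summing over `u` gives the claim with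
`c = ε c₀⁻⁶`.
-/

theorem Finset.exists_pos_le_of_pos {ι : Type*} (s : Finset ι) (f : ι → ℝ) :
    ∃ ε > 0, ∀ i ∈ s, 0 < f i → ε ≤ f i := by
  classical
  induction s using Finset.induction_on with
  | empty => exact ⟨1, one_pos, by simp⟩
  | insert j s _ ih =>
    obtain ⟨ε, hε, hle⟩ := ih
    by_cases hj : 0 < f j
    · refine ⟨min ε (f j), lt_min hε hj, ?_⟩
      simp only [Finset.mem_insert, forall_eq_or_imp]
      exact ⟨fun _ => min_le_right _ _,
        fun i hi hpos => (min_le_left _ _).trans (hle i hi hpos)⟩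
    · simp only [Finset.mem_insert, forall_eq_or_imp]
      exact ⟨ε, hε, fun h => absurd h hj, hle⟩

namespace CMS

section Cylinders

variable {S : Type*} {A : S → S → Prop}

theorem shift_iterate_apply_coe (x : Space A) (m i : ℕ) :
    ((shift A)^[m] x).1 i = x.1 (i + m) := by
  induction m generalizing x with
  | zero => rfl
  | succ m ih => rw [Function.iterate_succ_apply, ih]; rfl

theorem cylinder_nil : cylinder A ([] : List S) = univ :=
  eq_univ_of_forall fun _ i => i.elim0

theorem mem_cylinder_singleton {a : S} {x : Space A} : x ∈ cylinder A [a] ↔ x.1 0 = a :=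
  ⟨fun h => h 0, fun h i => by rw [Fin.fin_one_eq_zero i]; exact h⟩

theorem cylinder_append (v w : List S) :
    cylinder A (v ++ w) = cylinder A v ∩ (shift A)^[v.length] ⁻¹' cylinder A w := by
  ext x
  simp only [cylinder, mem_inter_iff, mem_preimage, mem_ofPred_eq, shift_iterate_apply_coe,
    List.get_eq_getElem, Fin.forall_iff, List.length_append]
  constructor
  · intro h
    refine ⟨fun i hi => ?_, fun i hi => ?_⟩
    · rw [h i (by omega), List.getElem_append_left hi]
    · rw [h (i + v.length) (by omega), List.getElem_append_right (by omega)]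
      simp
  · rintro ⟨hv, hw⟩ i hi
    rcases lt_or_ge i v.length with h | h
    · rw [hv i h, List.getElem_append_left h]
    · rw [List.getElem_append_right h, ← hw (i - v.length) (by omega), Nat.sub_add_cancel h]

theorem cylinder_nonempty_of_append {v w : List S} (h : (cylinder A (v ++ w)).Nonempty) :
    (cylinder A v).Nonempty ∧ (cylinder A w).Nonempty := by
  obtain ⟨x, hx⟩ := h
  rw [cylinder_append] at hx
  exact ⟨⟨x, hx.1⟩, ⟨_, hx.2⟩⟩

theorem disjoint_cylinder {v w : List S} (hlen : v.length = w.length) (hne : v ≠ w) :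
    Disjoint (cylinder A v) (cylinder A w) := by
  refine disjoint_left.2 fun x hv hw => hne (List.ext_get hlen fun i h₁ h₂ => ?_)
  exact (hv ⟨i, h₁⟩).symm.trans (hw ⟨i, h₂⟩)

theorem measurableSet_cylinder [TopologicalSpace S] [DiscreteTopology S] (w : List S) :
    MeasurableSet (cylinder A w) := by
  have hcoord (i : ℕ) : Continuous fun x : Space A => x.1 i :=
    (continuous_apply i).comp continuous_subtype_val
  have : cylinder A w = ⋂ i : Fin w.length, (fun x : Space A => x.1 i) ⁻¹' {w.get i} := by
    ext; simp [cylinder]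
  exact this ▸ .iInter fun i => ((isOpen_discrete _).preimage (hcoord i)).measurableSet

@[simp] theorem length_word (x : Space A) (n : ℕ) : (word x n).length = n :=
  List.length_ofFn

theorem mem_cylinder_word (x : Space A) (n : ℕ) : x ∈ cylinder A (word x n) :=
  fun i => (List.get_ofFn _ i).symm

theorem word_eq_of_mem_cylinder {w : List S} {x : Space A} (hx : x ∈ cylinder A w) :
    word x w.length = w :=
  List.ext_get (length_word x _) fun i _ h => (List.get_ofFn _ _).trans (hx ⟨i, h⟩)

theorem admissible_word (x : Space A) {n : ℕ} (hn : 0 < n) : Admissible A (word x n) :=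
  ⟨List.ne_nil_of_length_pos (by simpa using hn), List.isChain_ofFn.2 fun i _ => x.2 i⟩

theorem cylinder_word_subset_cylinder_singleton {a : S} {x : Space A} (hx : x ∈ cylinder A [a])
    {n : ℕ} (hn : 0 < n) : cylinder A (word x n) ⊆ cylinder A [a] := fun y hy => by
  rw [mem_cylinder_singleton] at hx ⊢
  simpa [word, hx] using hy ⟨0, by simpa using hn⟩

theorem exists_shift_eq {s : S} (y : Space A) (h : A s (y.1 0)) :
    ∃ x : Space A, x.1 0 = s ∧ shift A x = y :=
  ⟨⟨fun i => Nat.casesOn i s y.1, fun i => by cases i <;> [exact h; exact y.2 _]⟩, rfl, rfl⟩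

theorem cylinder_singleton_nonempty (hA : ∀ a, ∃ b, A a b) (a : S) :
    (cylinder A [a]).Nonempty := by
  choose next hnext using hA
  exact ⟨⟨fun k => next^[k] a, fun k => by
    simp only [Function.iterate_succ_apply']; exact hnext _⟩,
    mem_cylinder_singleton.2 rfl⟩

theorem Admissible.cylinder_nonempty (hA : ∀ a, ∃ b, A a b) {w : List S}
    (hw : Admissible A w) : (cylinder A w).Nonempty := by
  obtain ⟨hne, hchain⟩ := hw
  induction hchain with
  | nil => exact absurd rfl hne
  | singleton a => exact cylinder_singleton_nonempty hA a
  | cons_cons hab _ ih =>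
    obtain ⟨y, hy⟩ := ih (List.cons_ne_nil _ _)
    obtain ⟨x, hx0, rfl⟩ := exists_shift_eq y (by rw [show y.1 0 = _ from hy 0]; exact hab)
    exact ⟨x, by
      rw [← List.singleton_append, cylinder_append]
      exact ⟨mem_cylinder_singleton.2 hx0, hy⟩⟩

end Cylinders

theorem birkhoff_add {X : Type*} (T : X → X) (φ : X → ℝ) (m k : ℕ) (x : X) :
    birkhoff T φ (m + k) x = birkhoff T φ m x + birkhoff T φ k (T^[m] x) := by
  simp only [birkhoff, Finset.sum_range_add, ← Function.iterate_add_apply, add_comm]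

theorem exp_birkhoff_add {X : Type*} (T : X → X) (φ : X → ℝ) (P : ℝ) (m k : ℕ) (x : X) :
    Real.exp (-(P * ↑(m + k)) + birkhoff T φ (m + k) x) =
      Real.exp (-(P * m) + birkhoff T φ m x) *
        Real.exp (-(P * k) + birkhoff T φ k (T^[m] x)) := by
  rw [← Real.exp_add, birkhoff_add]
  congr 1
  push_cast
  ring

section Gibbs

variable {S : Type*} [TopologicalSpace S] {A : S → S → Prop} {φ : Space A → ℝ}
  {μ : Measure (Space A)} {c₀ P : ℝ}

theorem IsGibbsWith.bounds_of_mem (hG : IsGibbsWith A φ μ c₀ P) {w : List S} (hw : w ≠ [])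
    {x : Space A} (hx : x ∈ cylinder A w) :
    c₀⁻¹ * Real.exp (-(P * w.length) + birkhoff (shift A) φ w.length x) ≤
        μ.real (cylinder A w) ∧
      μ.real (cylinder A w) ≤
        c₀ * Real.exp (-(P * w.length) + birkhoff (shift A) φ w.length x) := by
  simpa only [measureReal_def, word_eq_of_mem_cylinder hx] using
    hG w.length (List.length_pos_iff.2 hw) x

theorem IsGibbsWith.measureReal_cylinder_pos [IsProbabilityMeasure μ]
    (hG : IsGibbsWith A φ μ c₀ P) (hc₀ : 0 < c₀) {w : List S} (hw : (cylinder A w).Nonempty) :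
    0 < μ.real (cylinder A w) := by
  rcases eq_or_ne w [] with rfl | hne
  · simp [cylinder_nil]
  obtain ⟨x, hx⟩ := hw
  exact lt_of_lt_of_le (by positivity) (hG.bounds_of_mem hne hx).1

theorem IsGibbsWith.measureReal_mul_le_cylinder_append [IsProbabilityMeasure μ]
    (hG : IsGibbsWith A φ μ c₀ P) (hc₀ : 1 ≤ c₀) {u v : List S} (hu : u ≠ [])
    (huv : (cylinder A (u ++ v)).Nonempty) :
    μ.real (cylinder A u) * μ.real (cylinder A v) ≤ c₀ ^ 3 * μ.real (cylinder A (u ++ v)) := by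
  rcases eq_or_ne v [] with rfl | hv
  · simpa [cylinder_nil] using
      le_mul_of_one_le_left measureReal_nonneg (one_le_pow₀ hc₀ : 1 ≤ c₀ ^ 3)
  obtain ⟨x, hx⟩ := huv
  have hx' := hx
  rw [cylinder_append] at hx'
  have hu_le := (hG.bounds_of_mem hu hx'.1).2
  have hv_le := (hG.bounds_of_mem hv hx'.2).2
  have huv_ge := (hG.bounds_of_mem (by simp [hu]) hx).1
  rw [List.length_append, exp_birkhoff_add] at huv_ge
  have hc₀' : c₀ ≠ 0 := by positivity
  calc μ.real (cylinder A u) * μ.real (cylinder A v)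
      ≤ (c₀ * Real.exp (-(P * u.length) + birkhoff (shift A) φ u.length x)) *
          (c₀ * Real.exp (-(P * v.length) +
            birkhoff (shift A) φ v.length ((shift A)^[u.length] x))) :=
        mul_le_mul hu_le hv_le measureReal_nonneg (by positivity)
    _ = c₀ ^ 3 * (c₀⁻¹ * (Real.exp (-(P * u.length) + birkhoff (shift A) φ u.length x) *
          Real.exp (-(P * v.length) +
            birkhoff (shift A) φ v.length ((shift A)^[u.length] x)))) := by
        field_simp
    _ ≤ c₀ ^ 3 * μ.real (cylinder A (u ++ v)) := by gcongr

theorem IsGibbsWith.measureReal_mul_mul_le_cylinder_append_singleton [IsProbabilityMeasure μ]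
    (hG : IsGibbsWith A φ μ c₀ P) (hc₀ : 1 ≤ c₀) {u l : List S} {b : S} (hu : u ≠ [])
    (hne : (cylinder A (u ++ l ++ [b])).Nonempty) :
    μ.real (cylinder A u) * μ.real (cylinder A l) * μ.real (cylinder A [b]) ≤
      c₀ ^ 6 * μ.real (cylinder A (u ++ l ++ [b])) :=
  calc μ.real (cylinder A u) * μ.real (cylinder A l) * μ.real (cylinder A [b])
      ≤ c₀ ^ 3 * μ.real (cylinder A (u ++ l)) * μ.real (cylinder A [b]) :=
        mul_le_mul_of_nonneg_right (hG.measureReal_mul_le_cylinder_append hc₀ hu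
          (cylinder_nonempty_of_append hne).1) measureReal_nonneg
    _ ≤ c₀ ^ 3 * (c₀ ^ 3 * μ.real (cylinder A (u ++ l ++ [b]))) := by
        rw [mul_assoc]
        exact mul_le_mul_of_nonneg_left
          (hG.measureReal_mul_le_cylinder_append hc₀ (by simp [hu]) hne) (by positivity)
    _ = c₀ ^ 6 * μ.real (cylinder A (u ++ l ++ [b])) := by ring

end Gibbs

theorem le_measureReal_inter_preimage_of_bridges {S : Type*} [Countable S] [TopologicalSpace S]
    [DiscreteTopology S] {A : S → S → Prop} (μ : Measure (Space A)) [IsFiniteMeasure μ]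
    {κ : ℝ} (hκ : 0 ≤ κ) {a b : S} {m k : ℕ} (hm : 0 < m)
    (h : ∀ x ∈ cylinder A [a], ∃ l : List S, l.length = k ∧
      κ * μ.real (cylinder A (word x m)) ≤ μ.real (cylinder A (word x m ++ l ++ [b]))) :
    κ * μ.real (cylinder A [a]) ≤
      μ.real (cylinder A [a] ∩ (shift A)^[m + k] ⁻¹' cylinder A [b]) := by
  set W := (fun x => word x m) '' cylinder A [a]
  have hW : W.Countable := W.to_countable
  have hbridge : ∀ u ∈ W, ∃ l : List S, l.length = k ∧
      ENNReal.ofReal κ * μ (cylinder A u) ≤ μ (cylinder A (u ++ l ++ [b])) := by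
    rintro _ ⟨x, hx, rfl⟩
    obtain ⟨l, hl, hle⟩ := h x hx
    refine ⟨l, hl, ?_⟩
    rw [← ofReal_measureReal, ← ofReal_measureReal, ← ENNReal.ofReal_mul hκ]
    exact ENNReal.ofReal_le_ofReal hle
  choose! L hL hLμ using hbridge
  have hsub : ∀ u, cylinder A (u ++ L u ++ [b]) ⊆ cylinder A u := fun u => by
    rw [List.append_assoc, cylinder_append]
    exact inter_subset_left
  have hcover : cylinder A [a] ⊆ ⋃ u ∈ W, cylinder A u := fun x hx =>
    mem_biUnion (mem_image_of_mem _ hx) (mem_cylinder_word x m)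
  have htarget : ⋃ u ∈ W, cylinder A (u ++ L u ++ [b]) ⊆
      cylinder A [a] ∩ (shift A)^[m + k] ⁻¹' cylinder A [b] := by
    refine iUnion₂_subset ?_
    rintro _ ⟨x, hx, rfl⟩ y hy
    refine ⟨cylinder_word_subset_cylinder_singleton hx hm (hsub _ hy), ?_⟩
    rw [cylinder_append] at hy
    simpa [hL _ ⟨x, hx, rfl⟩] using hy.2
  have hdisj : W.PairwiseDisjoint fun u => cylinder A (u ++ L u ++ [b]) := by
    rintro _ ⟨x, -, rfl⟩ _ ⟨y, -, rfl⟩ hne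
    exact (disjoint_cylinder (by simp) hne).mono (hsub _) (hsub _)
  have key : ENNReal.ofReal κ * μ (cylinder A [a]) ≤
      μ (cylinder A [a] ∩ (shift A)^[m + k] ⁻¹' cylinder A [b]) :=
    calc ENNReal.ofReal κ * μ (cylinder A [a])
        ≤ ENNReal.ofReal κ * ∑' u : W, μ (cylinder A u) := by
          gcongr
          exact (measure_mono hcover).trans (measure_biUnion_le μ hW _)
      _ = ∑' u : W, ENNReal.ofReal κ * μ (cylinder A u) := ENNReal.tsum_mul_left.symm
      _ ≤ ∑' u : W, μ (cylinder A (u ++ L u ++ [b])) :=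
          ENNReal.tsum_le_tsum fun u => hLμ u u.2
      _ = μ (⋃ u ∈ W, cylinder A (u ++ L u ++ [b])) :=
          (measure_biUnion hW hdisj fun _ _ => measurableSet_cylinder _).symm
      _ ≤ _ := measure_mono htarget
  simpa [measureReal_def, ENNReal.toReal_mul, hκ] using
    ENNReal.toReal_mono (measure_ne_top _ _) key

end CMS

open CMS in
theorem transition_lemma_general {S : Type*} [Countable S] [TopologicalSpace S] [DiscreteTopology S]
    (A : S → S → Prop) (hA : NoZeroRowCol A)
    (Λ : Finset (List S)) (N : ℕ) (hlen : ∀ l ∈ Λ, l.length = N)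
    (hprim : ∀ v w : List S, Admissible A v → Admissible A w →
      ∃ l ∈ Λ, Admissible A (v ++ l ++ w))
    (φ : Space A → ℝ)
    (μφ : Measure (Space A)) (hprob : IsProbabilityMeasure μφ) (c₀ P : ℝ) (hc₀ : 1 ≤ c₀)
    (hGibbs : IsGibbsWith A φ μφ c₀ P) :
    ∃ c : ℝ, 0 < c ∧ ∀ a b : S, ∀ n : ℕ, N < n →
      c * (μφ (cylinder A [a])).toReal * (μφ (cylinder A [b])).toReal ≤
        (μφ (cylinder A [a] ∩ (shift A)^[n] ⁻¹' cylinder A [b])).toReal := by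
  obtain ⟨hrow, -⟩ := hA
  obtain ⟨ε, hε, hεΛ⟩ := Λ.exists_pos_le_of_pos fun l => μφ.real (cylinder A l)
  refine ⟨ε / c₀ ^ 6, by positivity, fun a b n hn => ?_⟩
  obtain ⟨m, hm, rfl⟩ : ∃ m, 0 < m ∧ n = m + N := ⟨n - N, by omega, by omega⟩
  have hbridge : ∀ x ∈ cylinder A [a], ∃ l : List S, l.length = N ∧
      ε / c₀ ^ 6 * μφ.real (cylinder A [b]) * μφ.real (cylinder A (word x m)) ≤
        μφ.real (cylinder A (word x m ++ l ++ [b])) := by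
    intro x _
    obtain ⟨l, hlΛ, hadm⟩ :=
      hprim _ [b] (admissible_word x hm) ⟨List.cons_ne_nil _ _, List.isChain_singleton b⟩
    have hne := hadm.cylinder_nonempty hrow
    have hεl : ε ≤ μφ.real (cylinder A l) := hεΛ l hlΛ <| hGibbs.measureReal_cylinder_pos
      (by positivity) (cylinder_nonempty_of_append (cylinder_nonempty_of_append hne).1).2
    have hmul := hGibbs.measureReal_mul_mul_le_cylinder_append_singleton hc₀
      (admissible_word x hm).1 hne
    refine ⟨l, hlen l hlΛ, ?_⟩
    have hεmul := mul_le_mul_of_nonneg_right hεl <|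
      mul_nonneg (measureReal_nonneg (μ := μφ) (s := cylinder A (word x m)))
        (measureReal_nonneg (μ := μφ) (s := cylinder A [b]))
    rw [div_mul_eq_mul_div, div_mul_eq_mul_div, div_le_iff₀ (by positivity)]
    linarith
  have := le_measureReal_inter_preimage_of_bridges μφ (by positivity) hm hbridge
  simp only [measureReal_def] at this
  linarith

open CMS in
/-- **Transition lemma.** For a finitely primitive countable Markov shift (with associated
finite set `Λ` of admissible words, all of length `N`) and a Gibbs state `μφ`, there is `c > 0`
with `μφ([a] ∩ σ^{-n}[b]) ≥ c μφ[a] μφ[b]` for all symbols `a, b` and all `n > N`. -/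
theorem transition_lemma {S : Type*} [Countable S] [TopologicalSpace S] [DiscreteTopology S]
    (A : S → S → Prop) (hA : NoZeroRowCol A)
    (Λ : Finset (List S)) (N : ℕ) (hlen : ∀ l ∈ Λ, l.length = N)
    (hprim : ∀ v w : List S, Admissible A v → Admissible A w →
      ∃ l ∈ Λ, Admissible A (v ++ l ++ w))
    (φ : Space A → ℝ) (hφ : Measurable φ)
    (μφ : Measure (Space A)) (hprob : IsProbabilityMeasure μφ) (c₀ P : ℝ) (hc₀ : 1 ≤ c₀)
    (hGibbs : IsGibbsWith A φ μφ c₀ P) :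
    ∃ c : ℝ, 0 < c ∧ ∀ a b : S, ∀ n : ℕ, N < n →
      c * (μφ (cylinder A [a])).toReal * (μφ (cylinder A [b])).toReal ≤
        (μφ (cylinder A [a] ∩ (shift A)^[n] ⁻¹' cylinder A [b])).toReal :=
  transition_lemma_general A hA Λ N hlen hprim φ μφ hprob c₀ P hc₀ hGibbs
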